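/- Let W be a weight module for H̃ with finite-dimensional weight spaces, h ∈ H with (h,h)=1, and set e = (h t_1)(h t_1^{-1}) and f = (h t_2)(h t_2^{-1}) as operators on W. Then e and f preserve each weight space of W, and every monomial vector h_1 t_1^{a_1} t_2^{b_1} ⋯ h_n t_1^{a_n} t_2^{b_n} v built from a common eigenvector v of e and f is again a common eigenvector of e and f. -/

import Mathlib

noncomputable section

/-- Abstract presentation of the rank-2 Heisenberg-type Lie algebra
`H̃ = H ⊗ ℂ[t₁^{±1}, t₂^{±1}] ⊕ ℂC₁ ⊕ ℂC₂ ⊕ ℂd₁ ⊕ ℂd₂`. -/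
structure HeisAlg (H : Type*) [AddCommGroup H] [Module ℂ H]
    (B : H →ₗ[ℂ] H →ₗ[ℂ] ℂ) (L : Type*) [LieRing L] [LieAlgebra ℂ L] where
  E : (Fin 2 → ℤ) → H →ₗ[ℂ] L
  C : Fin 2 → L
  d : Fin 2 → L
  bracket_EE : ∀ (r s : Fin 2 → ℤ) (h₁ h₂ : H),
    ⁅E r h₁, E s h₂⁆ =
      if r + s = 0 then ∑ i : Fin 2, (B h₁ h₂ * (r i : ℂ)) • C i else 0
  C_central : ∀ (i : Fin 2) (y : L), ⁅C i, y⁆ = 0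
  bracket_dE : ∀ (i : Fin 2) (r : Fin 2 → ℤ) (h : H), ⁅d i, E r h⁆ = (r i : ℂ) • E r h
  bracket_dd : ∀ i j : Fin 2, ⁅d i, d j⁆ = 0
  spanning : Submodule.span ℂ
      ((⋃ r : Fin 2 → ℤ, Set.range (E r)) ∪ Set.range C ∪ Set.range d) = ⊤

variable {H : Type*} [AddCommGroup H] [Module ℂ H]
  {B : H →ₗ[ℂ] H →ₗ[ℂ] ℂ} {L : Type*} [LieRing L] [LieAlgebra ℂ L]

/-- The Cartan subalgebra `h = H ⊕ ℂC₁ ⊕ ℂC₂ ⊕ ℂd₁ ⊕ ℂd₂`, as a set. -/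
def HeisAlg.cartanSet (D : HeisAlg H B L) : Set L :=
  Set.range (D.E 0) ∪ Set.range D.C ∪ Set.range D.d

/-- Weight space of an `H̃`-module for a weight `χ` with respect to `h`. -/
def HeisAlg.wtSp (D : HeisAlg H B L)
    (W : Type*) [AddCommGroup W] [Module ℂ W] [LieRingModule L W] [LieModule ℂ L W]
    (χ : L → ℂ) : Submodule ℂ W :=
  ⨅ x ∈ D.cartanSet, Module.End.eigenspace (LieModule.toEnd ℂ L W x) (χ x)


variable (D : HeisAlg H B L)
  (W : Type*) [AddCommGroup W] [Module ℂ W] [LieRingModule L W] [LieModule ℂ L W]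

/-- The operator `e = (h t₁)(h t₁⁻¹)` on `W`. -/
def HeisAlg.eOp (h : H) : Module.End ℂ W :=
  (LieModule.toEnd ℂ L W (D.E (Pi.single 0 1) h)).comp
    (LieModule.toEnd ℂ L W (D.E (-Pi.single 0 1) h))

/-- The operator `f = (h t₂)(h t₂⁻¹)` on `W`. -/
def HeisAlg.fOp (h : H) : Module.End ℂ W :=
  (LieModule.toEnd ℂ L W (D.E (Pi.single 1 1) h)).comp
    (LieModule.toEnd ℂ L W (D.E (-Pi.single 1 1) h))

/-!
The weight spaces are preserved because `(h t^s)(h t^{-s})` shifts the `d`-eigenvalues by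
`s - s = 0`. For the monomials, everything rests on the central elements `C₁, C₂` acting by zero:
then all `h t^r` commute, so `e` and `f` commute with every factor of a monomial.

Suppose `χ(C_i) ≠ 0` on a nonzero weight space `W_χ`, and write `X_s = h t^s`,
`γ(s) = s₁ χ(C₁) + s₂ χ(C₂)`. The operators `P_s = X_s X_{-s}` commute, so the finite-dimensional
`W_χ` contains a common eigenvector `u`, `P_s u = b(s) u`. As `[X_s, X_{-s}] = γ(s)` on `u`,
`X_{-s} X_s u = (b(s) - γ(s)) u`; hence `X_s u ≠ 0` whenever `b(s) ≠ γ(s)`, and if `γ(s) ≠ 0`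
this holds for `s` or for `-s`. A combinatorial argument in `ℤ²` then yields infinitely many pairs
`(p, q)` with a fixed sum for which the vectors `X_p X_q u` are nonzero, lie in one weight space,
and carry pairwise different eigenvalue families of the `P_s`: they are linearly independent,
contradicting finite-dimensionality.
-/

section CommutingFamily

attribute [local instance] LieRing.ofAssociativeRing

theorem Module.End.exists_mem_ne_zero_forall_apply_eq_smul_of_commute {K V ι : Type*} [Field K]
    [IsAlgClosed K] [CharZero K] [AddCommGroup V] [Module K V] (f : ι → Module.End K V)
    (hf : ∀ i j, Commute (f i) (f j)) {p : Submodule K V} [FiniteDimensional K p] (hp : p ≠ ⊥)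
    (hfp : ∀ i, Set.MapsTo (f i) p p) : ∃ v ∈ p, v ≠ 0 ∧ ∀ i, ∃ c : K, f i v = c • v := by
  have : Nontrivial p := Submodule.nontrivial_iff_ne_bot.2 hp
  let g (i : ι) : Module.End K p := (f i).restrict (hfp i)
  let A := LieSubalgebra.lieSpan K (Module.End K p) (Set.range g)
  have : IsLieAbelian A := by
    rw [LieSubalgebra.isLieAbelian_lieSpan_iff]
    rintro _ ⟨i, rfl⟩ _ ⟨j, rfl⟩
    refine Commute.lie_eq (LinearMap.ext fun x => Subtype.ext ?_)
    exact LinearMap.congr_fun (hf i j) x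
  obtain ⟨χ, _⟩ := LieModule.exists_nontrivial_weightSpace_of_isSolvable K A p
  obtain ⟨⟨v, hv⟩, hv0⟩ := exists_ne (0 : LieModule.weightSpace p χ)
  have hgA (i : ι) : g i ∈ A := LieSubalgebra.subset_lieSpan ⟨i, rfl⟩
  refine ⟨v, v.2, fun h => hv0 (by simpa using h), fun i => ⟨χ ⟨g i, hgA i⟩, ?_⟩⟩
  exact congrArg Subtype.val ((LieModule.mem_weightSpace _ _).1 hv ⟨g i, hgA i⟩)

end CommutingFamily

theorem Module.End.commonEigenvectors_linearIndependent {K V ι κ : Type*} [Field K] [AddCommGroup V]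
    [Module K V] (f : κ → Module.End K V) (hf : ∀ i j, Commute (f i) (f j)) {v : ι → V}
    {μ : ι → κ → K} (hμ : Function.Injective μ) (hv0 : ∀ n, v n ≠ 0)
    (hv : ∀ n k, f k (v n) = μ n k • v n) : LinearIndependent K v :=
  ((Module.End.independent_iInf_maxGenEigenspace_of_forall_mapsTo f fun i j φ =>
      Module.End.mapsTo_maxGenEigenspace_of_comm (hf j i) φ).comp hμ).linearIndependent _
    (fun n => Submodule.mem_iInf _ |>.2 fun k =>
      Module.End.eigenspace_le_maxGenEigenspace (Module.End.mem_eigenspace_iff.2 (hv n k))) hv0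

theorem Set.Infinite.exists_infinite_inter_preimage_singleton {α β : Type*} {s : Set α}
    {t : Set β} {f : α → β} (hs : s.Infinite) (hf : Set.MapsTo f s t) (ht : t.Finite) :
    ∃ y ∈ t, (s ∩ f ⁻¹' {y}).Infinite := by
  by_contra! h
  exact hs ((ht.biUnion h).subset fun x hx => Set.mem_biUnion (hf hx) ⟨hx, rfl⟩)

theorem Int.mem_of_le_of_steps {S : Set ℤ} {x₀ x₁ : ℤ} (h₁ : x₁ ∈ S)
    (hsucc : ∀ x ∈ S, x + 1 ≠ x₀ → x + 1 ∈ S) (hskip : x₀ - 1 ∈ S → x₀ + 1 ∈ S) {x : ℤ}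
    (hx : x₁ ≤ x) (hx₀ : x ≠ x₀) : x ∈ S := by
  suffices ∀ y, x₁ ≤ y → y ∈ S ∨ (y = x₀ ∧ y - 1 ∈ S) from (this x hx).resolve_right (hx₀ ·.1)
  intro y hy
  induction y, hy using Int.leInduction with
  | base => exact .inl h₁
  | succ y _ ih =>
    rcases ih with hy | ⟨rfl, hy⟩
    · by_cases h : y + 1 = x₀
      · exact .inr ⟨h, by simpa using hy⟩
      · exact .inl (hsucc y hy h)
    · exact .inl (hskip hy)

theorem Int.forall_mem_or_forall_mem_of_cover {P Q : Set ℤ} {x₀ : ℤ}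
    (hcov : ∀ x ≠ x₀, x ∈ P ∨ -x ∈ Q) (hfar : ∀ x ∈ P, ∀ y ∈ Q, x + y ∉ ({-2, -1, 1, 2} : Set ℤ)) :
    (∀ x ≠ x₀, x ∈ P) ∨ ∀ y ≠ -x₀, y ∈ Q := by
  rcases P.eq_empty_or_nonempty with hP | ⟨x₁, hx₁⟩
  · refine .inr fun y hy => ?_
    simpa [hP] using hcov (-y) (by omega)
  · have step (x) (hx : x ∈ P) (y) (hy : y ≠ x₀)
        (hxy : y - x = -2 ∨ y - x = -1 ∨ y - x = 1 ∨ y - x = 2) : y ∈ P :=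
      (hcov y hy).resolve_right fun hq =>
        hfar x hx _ hq (by simp only [Set.mem_insert_iff, Set.mem_singleton_iff]; omega)
    refine .inl fun x hx => ?_
    rcases le_total x₁ x with h | h
    · exact Int.mem_of_le_of_steps hx₁ (fun y hy hne => step y hy _ hne (by omega))
        (fun hy => step _ hy _ (by omega) (by omega)) h hx
    · have := Int.mem_of_le_of_steps (S := {y | -y ∈ P}) (x₀ := -x₀) (by simpa using hx₁)
        (fun y hy hne => step _ hy _ (by omega) (by omega))
        (fun hy => step _ hy _ (by omega) (by omega)) (neg_le_neg h) (by omega)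
      simpa using this

section PairFamily

variable {A A' : Type*} [AddCommGroup A] [AddCommGroup A']

def signedPair (pq : A × A) : List A := [pq.1, -pq.1, pq.2, -pq.2]

theorem signedPair_nodup_iff {pq : A × A} :
    (signedPair pq).Nodup ↔ pq.1 ≠ -pq.1 ∧ pq.2 ≠ -pq.2 ∧ pq.1 ≠ pq.2 ∧ pq.1 ≠ -pq.2 := by
  simp only [signedPair, List.nodup_cons, List.mem_cons, List.not_mem_nil, List.nodup_nil]
  grind

theorem signedPair_disjoint_iff {pq pq' : A × A} :
    (signedPair pq).Disjoint (signedPair pq') ↔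
      (pq.1 ≠ pq'.1 ∧ pq.1 ≠ -pq'.1 ∧ pq.1 ≠ pq'.2 ∧ pq.1 ≠ -pq'.2) ∧
        (pq.2 ≠ pq'.1 ∧ pq.2 ≠ -pq'.1 ∧ pq.2 ≠ pq'.2 ∧ pq.2 ≠ -pq'.2) := by
  simp only [signedPair, List.disjoint_cons_left, List.disjoint_cons_right, List.disjoint_nil_left,
    List.mem_cons, List.not_mem_nil]
  grind

/-- For such a family and a common eigenvector `u` of the operators `X_s X_{-s}`, the vectors
`X_p X_q u`, `(p, q) ∈ F`, lie in one weight space, and their eigenvalues differ from those of `u`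
exactly at the indices `±p, ±q` listed by `signedPair (p, q)`, which separates them. -/
structure IsPairFamily (γ : A →+ ℂ) (G : Set A) (c : A) (F : Set (A × A)) : Prop where
  infinite : F.Infinite
  fst_mem : ∀ pq ∈ F, pq.1 ∈ G
  snd_mem : ∀ pq ∈ F, pq.2 ∈ G
  add_eq : ∀ pq ∈ F, pq.1 + pq.2 = c
  apply_ne_zero : ∀ pq ∈ F, γ pq.1 ≠ 0 ∨ γ pq.2 ≠ 0
  nodup : ∀ pq ∈ F, (signedPair pq).Nodup
  pairwise_disjoint : F.Pairwise fun pq pq' => (signedPair pq).Disjoint (signedPair pq')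

def pairShift [DecidableEq A] (γ : A →+ ℂ) (b : A → ℂ) (m : A) : A → ℂ :=
  b - Pi.single m (γ m) + Pi.single (-m) (γ (-m))

section pairShift

variable [DecidableEq A] {γ : A →+ ℂ} {b : A → ℂ} {m t : A}

theorem pairShift_apply_of_ne (ht : t ≠ m) (ht' : t ≠ -m) : pairShift γ b m t = b t := by
  simp [pairShift, ht, ht']

theorem pairShift_apply_self (hm : m ≠ -m) : pairShift γ b m m = b m - γ m := by
  simp [pairShift, hm]

theorem IsPairFamily.injOn_pairShift {G : Set A} {c : A} {F : Set (A × A)}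
    (hF : IsPairFamily γ G c F) (b : A → ℂ) :
    F.InjOn fun pq => pairShift γ (pairShift γ b pq.2) pq.1 := by
  rintro ⟨p, q⟩ hpq ⟨p', q'⟩ hpq' heq
  by_contra hne
  obtain ⟨hp, hq, hpq₁, hpq₂⟩ := signedPair_nodup_iff.1 (hF.nodup _ hpq)
  obtain ⟨⟨hp₁, hp₂, hp₃, hp₄⟩, hq₁, hq₂, hq₃, hq₄⟩ :=
    signedPair_disjoint_iff.1 (hF.pairwise_disjoint hpq hpq' hne)
  rcases hF.apply_ne_zero _ hpq with h | h
  · have := congrFun heq p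
    dsimp only at this
    rw [pairShift_apply_self hp, pairShift_apply_of_ne hpq₁ hpq₂, pairShift_apply_of_ne hp₁ hp₂,
      pairShift_apply_of_ne hp₃ hp₄] at this
    exact h (by linear_combination -this)
  · have := congrFun heq q
    dsimp only at this
    rw [pairShift_apply_of_ne (Ne.symm hpq₁) fun h => hpq₂ (by rw [h, neg_neg]),
      pairShift_apply_self hq, pairShift_apply_of_ne hq₁ hq₂, pairShift_apply_of_ne hq₃ hq₄] at this
    exact h (by linear_combination -this)

end pairShift

theorem IsPairFamily.map {γ : A' →+ ℂ} {G : Set A'} {c : A} {F : Set (A × A)} (f : A →+ A')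
    (hf : Function.Injective f) (hF : IsPairFamily (γ.comp f) (f ⁻¹' G) c F) :
    IsPairFamily γ G (f c) (Prod.map f f '' F) := by
  have hsigns (pq : A × A) : signedPair (Prod.map f f pq) = (signedPair pq).map f := by
    simp [signedPair]
  have hinj : Set.InjOn (Prod.map f f) F := (hf.prodMap hf).injOn
  refine ⟨hF.infinite.image hinj, ?_, ?_, ?_, ?_, ?_, hinj.pairwise_image.2 ?_⟩
  · rintro _ ⟨pq, hpq, rfl⟩
    exact hF.fst_mem pq hpq
  · rintro _ ⟨pq, hpq, rfl⟩
    exact hF.snd_mem pq hpq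
  · rintro _ ⟨pq, hpq, rfl⟩
    simp [← hF.add_eq pq hpq]
  · rintro _ ⟨pq, hpq, rfl⟩
    exact hF.apply_ne_zero pq hpq
  · rintro _ ⟨pq, hpq, rfl⟩
    rw [hsigns]
    exact (hF.nodup pq hpq).map hf
  · intro pq hpq pq' hpq' hne
    simp only [Function.onFun, hsigns]
    exact (hF.pairwise_disjoint hpq hpq' hne).map hf

end PairFamily

section IntPairs

variable {γ : ℤ × ℤ →+ ℂ} {G : Set (ℤ × ℤ)}

theorem exists_isPairFamily_of_row {n x₀ : ℤ} (hn : n ≠ 0)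
    (hrow : ∀ x ≠ x₀, (x, n) ∈ G ∧ γ (x, n) ≠ 0) : ∃ c F, IsPairFamily γ G c F := by
  let pair (x : ℤ) : (ℤ × ℤ) × (ℤ × ℤ) := ((x, n), (2 * x₀ + 1 - x, n))
  have hinj : pair.Injective := fun x y h => by simpa [pair] using congrArg (·.1.1) h
  refine ⟨(2 * x₀ + 1, 2 * n), pair '' Set.Iio x₀,
    ⟨(Set.Iio_infinite x₀).image hinj.injOn, ?_, ?_, ?_, ?_, ?_, ?_⟩⟩
  · rintro _ ⟨x, hx, rfl⟩
    exact (hrow x hx.ne).1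
  · rintro _ ⟨x, hx, rfl⟩
    exact (hrow _ (by have := Set.mem_Iio.1 hx; omega)).1
  · rintro _ ⟨x, -, rfl⟩
    simp only [pair, Prod.mk_add_mk, add_sub_cancel, two_mul]
  · rintro _ ⟨x, hx, rfl⟩
    exact .inl (hrow x hx.ne).2
  · rintro _ ⟨x, hx, rfl⟩
    rw [Set.mem_Iio] at hx
    refine signedPair_nodup_iff.2 ?_
    simp only [pair, ne_eq, Prod.ext_iff, Prod.fst_neg, Prod.snd_neg]
    omega
  · rintro _ ⟨x, hx, rfl⟩ _ ⟨y, hy, rfl⟩ hne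
    have hxy : x ≠ y := fun h => hne (h ▸ rfl)
    rw [Set.mem_Iio] at hx hy
    refine signedPair_disjoint_iff.2 ?_
    simp only [pair, ne_eq, Prod.ext_iff, Prod.fst_neg, Prod.snd_neg]
    omega

theorem exists_isPairFamily_of_close (hγ : γ (1, 0) ≠ 0)
    (hclose : ∀ n : ℤ, 1 ≤ n → ∃ x y, (x, n) ∈ G ∧ (y, -n) ∈ G ∧
      x + y ∈ ({-2, -1, 1, 2} : Set ℤ)) : ∃ c F, IsPairFamily γ G c F := by
  choose! x y hx hy hxy using hclose
  obtain ⟨σ, hσ, hinf⟩ := (Set.Ici_infinite (1 : ℤ)).exists_infinite_inter_preimage_singleton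
    (f := fun n => x n + y n) (fun n hn => hxy n hn) (Set.toFinite _)
  have hσ0 : σ ≠ 0 := by rintro rfl; simp at hσ
  let pair (n : ℤ) : (ℤ × ℤ) × (ℤ × ℤ) := ((x n, n), (y n, -n))
  have hinj : pair.Injective := fun n m h => by simpa [pair] using congrArg (·.1.2) h
  refine ⟨(σ, 0), pair '' (Set.Ici 1 ∩ (fun n => x n + y n) ⁻¹' {σ}),
    ⟨hinf.image hinj.injOn, ?_, ?_, ?_, ?_, ?_, ?_⟩⟩
  · rintro _ ⟨n, hn, rfl⟩
    exact hx n hn.1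
  · rintro _ ⟨n, hn, rfl⟩
    exact hy n hn.1
  · rintro _ ⟨n, hn, rfl⟩
    simp [pair, hn.2.symm]
  · rintro _ ⟨n, hn, rfl⟩
    have hsum : γ (x n, n) + γ (y n, -n) = σ • γ (1, 0) := by
      rw [← map_add, ← map_zsmul]
      simp [show x n + y n = σ from hn.2]
    by_contra! h
    rw [h.1, h.2, add_zero, eq_comm, smul_eq_zero] at hsum
    exact hsum.elim hσ0 hγ
  · rintro _ ⟨n, ⟨hn, hσn⟩, rfl⟩
    rw [Set.mem_Ici] at hn
    rw [Set.mem_preimage, Set.mem_singleton_iff] at hσn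
    refine signedPair_nodup_iff.2 ?_
    simp only [pair, ne_eq, Prod.ext_iff, Prod.fst_neg, Prod.snd_neg]
    omega
  · rintro _ ⟨n, ⟨hn, -⟩, rfl⟩ _ ⟨m, ⟨hm, -⟩, rfl⟩ hne
    have hnm : n ≠ m := fun h => hne (h ▸ rfl)
    rw [Set.mem_Ici] at hn hm
    refine signedPair_disjoint_iff.2 ?_
    simp only [pair, ne_eq, Prod.ext_iff, Prod.fst_neg, Prod.snd_neg]
    omega

theorem exists_forall_ne_apply_ne_zero (hγ : γ (1, 0) ≠ 0) (n : ℤ) :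
    ∃ x₀, ∀ x ≠ x₀, γ (x, n) ≠ 0 := by
  by_cases h : ∃ x₀, γ (x₀, n) = 0
  · obtain ⟨x₀, h₀⟩ := h
    refine ⟨x₀, fun x hx hx0 => ?_⟩
    have : γ (x, n) - γ (x₀, n) = (x - x₀) • γ (1, 0) := by
      rw [← map_sub, ← map_zsmul]
      simp
    rw [hx0, h₀, sub_zero, eq_comm, smul_eq_zero] at this
    exact this.elim (sub_ne_zero.2 hx) hγ
  · push Not at h
    exact ⟨0, fun x _ => h x⟩

theorem exists_isPairFamily_prod (hγ : γ (1, 0) ≠ 0)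
    (hcov : ∀ z, γ z ≠ 0 → z ∈ G ∨ -z ∈ G) : ∃ c F, IsPairFamily γ G c F := by
  -- Rows `n` and `-n` either contain points of `G` whose first coordinates add up to a small
  -- nonzero number, or one of them lies in `G` up to the single zero of `γ` on that row. If the
  -- first case occurs for every `n ≥ 1`, infinitely many rows share the same small sum.
  by_cases hclose : ∀ n : ℤ, 1 ≤ n → ∃ x y, (x, n) ∈ G ∧ (y, -n) ∈ G ∧
      x + y ∈ ({-2, -1, 1, 2} : Set ℤ)
  · exact exists_isPairFamily_of_close hγ hclose
  push Not at hclose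
  obtain ⟨n, hn, hfar⟩ := hclose
  obtain ⟨x₀, hx₀⟩ := exists_forall_ne_apply_ne_zero hγ n
  rcases Int.forall_mem_or_forall_mem_of_cover (P := {x | (x, n) ∈ G}) (Q := {y | (y, -n) ∈ G})
    (fun x hx => by simpa using hcov _ (hx₀ x hx)) (fun x hx y hy => hfar x y hx hy) with hP | hQ
  · exact exists_isPairFamily_of_row (by omega) fun x hx => ⟨hP x hx, hx₀ x hx⟩
  · refine exists_isPairFamily_of_row (x₀ := -x₀) (by omega) fun y hy => ⟨hQ y hy, fun h => ?_⟩
    refine hx₀ (-y) (by omega) ?_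
    rw [show ((-y, n) : ℤ × ℤ) = -(y, -n) by simp, map_neg, h, neg_zero]

end IntPairs

theorem exists_isPairFamily {γ : (Fin 2 → ℤ) →+ ℂ} {G : Set (Fin 2 → ℤ)} {i : Fin 2}
    (hγ : γ (Pi.single i 1) ≠ 0) (hcov : ∀ s, γ s ≠ 0 → s ∈ G ∨ -s ∈ G) :
    ∃ c F, IsPairFamily γ G c F := by
  obtain ⟨j, hji⟩ := exists_ne i
  let f : ℤ × ℤ →+ (Fin 2 → ℤ) :=
    (zmultiplesHom _ (Pi.single i 1)).comp (AddMonoidHom.fst ℤ ℤ) +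
      (zmultiplesHom _ (Pi.single j 1)).comp (AddMonoidHom.snd ℤ ℤ)
  have hfi (z : ℤ × ℤ) : f z i = z.1 := by simp [f, hji]
  have hfj (z : ℤ × ℤ) : f z j = z.2 := by simp [f, hji]
  have hf : Function.Injective f := fun z z' h =>
    Prod.ext (by rw [← hfi, ← hfi, h]) (by rw [← hfj, ← hfj, h])
  obtain ⟨c, F, hF⟩ := exists_isPairFamily_prod (γ := γ.comp f) (G := f ⁻¹' G)
    (by simpa [f] using hγ) (fun z hz => by simpa using hcov (f z) hz)
  exact ⟨_, _, hF.map f hf⟩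

namespace HeisAlg

variable {D W} {χ : L → ℂ} {h : H} {v w : W}

theorem mem_wtSp_iff : w ∈ D.wtSp W χ ↔ ∀ x ∈ D.cartanSet, ⁅x, w⁆ = χ x • w := by
  simp [wtSp]

theorem lie_E_zero_E (h₁ h₂ : H) (s : Fin 2 → ℤ) : ⁅D.E 0 h₁, D.E s h₂⁆ = 0 := by
  rw [D.bracket_EE]
  split_ifs <;> simp

theorem lie_lie_E_E (r s : Fin 2 → ℤ) (h₁ h₂ : H) (x : L) : ⁅⁅D.E r h₁, D.E s h₂⁆, x⁆ = 0 := by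
  rw [D.bracket_EE]
  split_ifs <;> simp [D.C_central]

variable (D) in
/-- The scalar by which `⁅h t^s, h t^{-s}⁆` acts on a vector of weight `χ` when `(h, h) = 1`. -/
def charge (χ : L → ℂ) : (Fin 2 → ℤ) →+ ℂ where
  toFun s := ∑ i, (s i : ℂ) * χ (D.C i)
  map_zero' := by simp
  map_add' s t := by simp [add_mul, Finset.sum_add_distrib]

theorem charge_single (χ : L → ℂ) (i : Fin 2) : D.charge χ (Pi.single i 1) = χ (D.C i) := by
  fin_cases i <;> simp [charge]

theorem lie_E_lie_E (hC : ∀ i, ⁅D.C i, w⁆ = χ (D.C i) • w) (r s : Fin 2 → ℤ) (h₁ h₂ : H) :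
    ⁅D.E r h₁, ⁅D.E s h₂, w⁆⁆ =
      ⁅D.E s h₂, ⁅D.E r h₁, w⁆⁆ + (if r + s = 0 then B h₁ h₂ * D.charge χ r else 0) • w := by
  rw [leibniz_lie, add_comm, D.bracket_EE]
  split_ifs
  · simp [hC, charge, smul_smul, mul_assoc, ← add_smul, mul_add]
  · simp

theorem lie_C_lie (hC : ∀ i, ⁅D.C i, w⁆ = χ (D.C i) • w) (x : L) (i : Fin 2) :
    ⁅D.C i, ⁅x, w⁆⁆ = χ (D.C i) • ⁅x, w⁆ := by
  rw [leibniz_lie, D.C_central, zero_lie, zero_add, hC, lie_smul]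

variable (D W) in
structure IsShiftedWeightVector (χ : L → ℂ) (δ : Fin 2 → ℤ) (w : W) : Prop where
  lie_E_zero : ∀ h', ⁅D.E 0 h', w⁆ = χ (D.E 0 h') • w
  lie_C : ∀ i, ⁅D.C i, w⁆ = χ (D.C i) • w
  lie_d : ∀ i, ⁅D.d i, w⁆ = (χ (D.d i) + δ i) • w

theorem isShiftedWeightVector_zero_iff : D.IsShiftedWeightVector W χ 0 w ↔ w ∈ D.wtSp W χ := by
  rw [mem_wtSp_iff]
  constructor
  · rintro ⟨hE, hC, hd⟩ x ((⟨h', rfl⟩ | ⟨i, rfl⟩) | ⟨i, rfl⟩)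
    · exact hE h'
    · exact hC i
    · simpa using hd i
  · intro hw
    exact ⟨fun h' => hw _ (.inl (.inl ⟨h', rfl⟩)), fun i => hw _ (.inl (.inr ⟨i, rfl⟩)),
      fun i => by simpa using hw _ (.inr ⟨i, rfl⟩)⟩

theorem IsShiftedWeightVector.lie_E {δ : Fin 2 → ℤ} (hw : D.IsShiftedWeightVector W χ δ w)
    (s : Fin 2 → ℤ) (h : H) : D.IsShiftedWeightVector W χ (δ + s) ⁅D.E s h, w⁆ := by
  refine ⟨fun h' => ?_, lie_C_lie hw.lie_C _, fun i => ?_⟩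
  · rw [leibniz_lie, lie_E_zero_E, zero_lie, zero_add, hw.lie_E_zero, lie_smul]
  · rw [leibniz_lie, D.bracket_dE, hw.lie_d, lie_smul, smul_lie, Pi.add_apply, Int.cast_add]
    module

variable (D W) in
theorem exists_forall_isShiftedWeightVector_mem_wtSp (χ : L → ℂ) (δ : Fin 2 → ℤ) :
    ∃ μ : L → ℂ, ∀ w, D.IsShiftedWeightVector W χ δ w → w ∈ D.wtSp W μ := by
  classical
  -- The generators `E 0 h`, `C i`, `d i` need not be distinct elements of `L`, so the weight is
  -- not defined by cases on `x` but by choosing the common eigenvalue of `x`.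
  let IsCommonEigenvalue (x : L) (c : ℂ) : Prop :=
    ∀ w, D.IsShiftedWeightVector W χ δ w → ⁅x, w⁆ = c • w
  refine ⟨fun x => if hx : ∃ c, IsCommonEigenvalue x c then hx.choose else 0,
    fun w hw => mem_wtSp_iff.2 fun x hx => ?_⟩
  have hex : ∃ c, IsCommonEigenvalue x c := by
    rcases hx with (⟨h', rfl⟩ | ⟨i, rfl⟩) | ⟨i, rfl⟩
    · exact ⟨_, fun w hw => hw.lie_E_zero h'⟩
    · exact ⟨_, fun w hw => hw.lie_C i⟩
    · exact ⟨_, fun w hw => hw.lie_d i⟩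
  simp only [dif_pos hex]
  exact hex.choose_spec w hw

variable (D W) in
def pairOp (h : H) (s : Fin 2 → ℤ) : Module.End ℂ W :=
  LieModule.toEnd ℂ L W (D.E s h) * LieModule.toEnd ℂ L W (D.E (-s) h)

theorem pairOp_apply (h : H) (s : Fin 2 → ℤ) (w : W) :
    D.pairOp W h s w = ⁅D.E s h, ⁅D.E (-s) h, w⁆⁆ :=
  rfl

theorem eOp_eq_pairOp (h : H) : D.eOp W h = D.pairOp W h (Pi.single 0 1) :=
  rfl

theorem fOp_eq_pairOp (h : H) : D.fOp W h = D.pairOp W h (Pi.single 1 1) :=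
  rfl

theorem pairOp_mem_wtSp (hv : v ∈ D.wtSp W χ) (h : H) (s : Fin 2 → ℤ) :
    D.pairOp W h s v ∈ D.wtSp W χ := by
  rw [← isShiftedWeightVector_zero_iff] at hv ⊢
  simpa [pairOp_apply] using (hv.lie_E (-s) h).lie_E s h

theorem commute_toEnd_of_lie_eq_zero {x y : L} (hxy : ⁅x, y⁆ = 0) :
    Commute (LieModule.toEnd ℂ L W x) (LieModule.toEnd ℂ L W y) :=
  LinearMap.ext fun w => by
    simp only [Module.End.mul_apply, LieModule.toEnd_apply_apply]
    rw [← sub_eq_zero, ← lie_lie, hxy, zero_lie]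

theorem pairOp_commute (h : H) (s t : Fin 2 → ℤ) : Commute (D.pairOp W h s) (D.pairOp W h t) := by
  set ρ := LieModule.toEnd ℂ L W
  by_cases hts : t = s
  · rw [hts]
  by_cases hts' : t = -s
  · subst hts'
    have hK (x : L) : Commute (ρ ⁅D.E s h, D.E (-s) h⁆) (ρ x) :=
      commute_toEnd_of_lie_eq_zero (lie_lie_E_E _ _ _ _ x)
    have hneg : D.pairOp W h (-s) = D.pairOp W h s - ρ ⁅D.E s h, D.E (-s) h⁆ :=
      LinearMap.ext fun w => by
        simp only [LinearMap.sub_apply, pairOp_apply, neg_neg, ρ, LieModule.toEnd_apply_apply,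
          lie_lie]
        abel
    rw [hneg]
    exact (Commute.refl _).sub_right ((hK _).mul_right (hK _)).symm
  · have hc (a b : Fin 2 → ℤ) (hab : a + b ≠ 0) : Commute (ρ (D.E a h)) (ρ (D.E b h)) :=
      commute_toEnd_of_lie_eq_zero (by rw [D.bracket_EE, if_neg hab])
    apply Commute.mul_left <;> apply Commute.mul_right <;> apply hc <;> grind

theorem lie_E_neg_lie_E (hh : B h h = 1) (hC : ∀ i, ⁅D.C i, w⁆ = χ (D.C i) • w)
    (m : Fin 2 → ℤ) : ⁅D.E (-m) h, ⁅D.E m h, w⁆⁆ = D.pairOp W h m w - D.charge χ m • w := by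
  rw [pairOp_apply, lie_E_lie_E hC m (-m), if_pos (add_neg_cancel m), hh, one_mul,
    add_sub_cancel_right]

theorem pairOp_lie_E (hh : B h h = 1) (hC : ∀ i, ⁅D.C i, w⁆ = χ (D.C i) • w)
    {b : (Fin 2 → ℤ) → ℂ} (hb : ∀ t, D.pairOp W h t w = b t • w) (m t : Fin 2 → ℤ) :
    D.pairOp W h t ⁅D.E m h, w⁆ = pairShift (D.charge χ) b m t • ⁅D.E m h, w⁆ := by
  rw [pairOp_apply, lie_E_lie_E hC (-t) m, lie_add, lie_E_lie_E (lie_C_lie hC _) t m,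
    ← pairOp_apply, hb, lie_smul, lie_smul, hh]
  simp only [one_mul, add_eq_zero_iff_eq_neg, neg_inj, pairShift, Pi.add_apply,
    Pi.sub_apply, Pi.single_apply, map_neg]
  by_cases h₁ : t = m
  · subst h₁
    by_cases h₂ : t = -t
    · have h0 : D.charge χ t = 0 :=
        CharZero.eq_neg_self_iff.1 (by simpa using congrArg (D.charge χ) h₂)
      simp only [← h₂, if_true, h0]
      module
    · simp only [if_neg h₂, if_true]
      module
  · by_cases h₂ : t = -m
    · subst h₂
      simp only [if_neg h₁, if_true, neg_neg, map_neg]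
      module
    · simp [h₁, h₂]

theorem lie_E_ne_zero (hh : B h h = 1) (hC : ∀ i, ⁅D.C i, w⁆ = χ (D.C i) • w) {m : Fin 2 → ℤ}
    {b : ℂ} (hb : D.pairOp W h m w = b • w) (hw : w ≠ 0) (hbm : b ≠ D.charge χ m) :
    ⁅D.E m h, w⁆ ≠ 0 := by
  intro h0
  have := lie_E_neg_lie_E hh hC m
  rw [h0, lie_zero, hb, ← sub_smul, eq_comm, smul_eq_zero, sub_eq_zero] at this
  exact this.elim hbm hw

theorem ne_charge_or_ne_charge_neg (hh : B h h = 1) (hC : ∀ i, ⁅D.C i, w⁆ = χ (D.C i) • w)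
    {b : (Fin 2 → ℤ) → ℂ} (hb : ∀ t, D.pairOp W h t w = b t • w) (hw : w ≠ 0)
    {m : Fin 2 → ℤ} (hm : D.charge χ m ≠ 0) :
    b m ≠ D.charge χ m ∨ b (-m) ≠ D.charge χ (-m) := by
  have h₁ := hb (-m)
  rw [pairOp_apply, neg_neg, lie_E_neg_lie_E hh hC m, hb m, ← sub_smul] at h₁
  have h₂ : b m - D.charge χ m = b (-m) := smul_left_injective ℂ hw h₁
  by_contra! h
  rw [h.1, h.2, map_neg, sub_self, eq_comm, neg_eq_zero] at h₂
  exact hm h₂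

theorem not_isPairFamily (hfd : ∀ μ : L → ℂ, FiniteDimensional ℂ (D.wtSp W μ))
    (hh : B h h = 1) {u : W} (hu : u ∈ D.wtSp W χ) (hu0 : u ≠ 0) {b : (Fin 2 → ℤ) → ℂ}
    (hb : ∀ t, D.pairOp W h t u = b t • u) (c : Fin 2 → ℤ) (F : Set ((Fin 2 → ℤ) × (Fin 2 → ℤ))) :
    ¬IsPairFamily (D.charge χ) {m | b m ≠ D.charge χ m} c F := by
  intro hF
  rw [← isShiftedWeightVector_zero_iff] at hu
  let w (pq : F) : W := ⁅D.E pq.1.1 h, ⁅D.E pq.1.2 h, u⁆⁆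
  obtain ⟨μ, hμ⟩ := exists_forall_isShiftedWeightVector_mem_wtSp D W χ c
  have hw_mem (pq : F) : w pq ∈ D.wtSp W μ := hμ _ <| by
    simpa [hF.add_eq pq.1 pq.2, add_comm] using (hu.lie_E pq.1.2 h).lie_E pq.1.1 h
  have hb₁ (pq : F) := pairOp_lie_E hh hu.lie_C hb pq.1.2
  have hb₂ (pq : F) := pairOp_lie_E hh (hu.lie_E pq.1.2 h).lie_C (hb₁ pq) pq.1.1
  have hw0 (pq : F) : w pq ≠ 0 := by
    obtain ⟨-, -, hne, hne'⟩ := signedPair_nodup_iff.1 (hF.nodup _ pq.2)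
    refine lie_E_ne_zero hh (hu.lie_E pq.1.2 h).lie_C (hb₁ pq pq.1.1) ?_ ?_
    · exact lie_E_ne_zero hh hu.lie_C (hb _) hu0 (hF.snd_mem _ pq.2)
    · rw [pairShift_apply_of_ne hne hne']
      exact hF.fst_mem _ pq.2
  have hli : LinearIndependent ℂ fun pq : F => (⟨w pq, hw_mem pq⟩ : D.wtSp W μ) :=
    LinearIndependent.of_comp (D.wtSp W μ).subtype <|
      Module.End.commonEigenvectors_linearIndependent (D.pairOp W h) (pairOp_commute h)
        (hF.injOn_pairShift b).injective hw0 fun pq t => hb₂ pq t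
  have := hfd μ
  exact hF.infinite (Set.finite_coe_iff.1 hli.finite)

theorem weight_C_eq_zero (hfd : ∀ μ : L → ℂ, FiniteDimensional ℂ (D.wtSp W μ))
    (hh : B h h = 1) (hv : v ∈ D.wtSp W χ) (hv0 : v ≠ 0) (i : Fin 2) : χ (D.C i) = 0 := by
  by_contra hχ
  have := hfd χ
  obtain ⟨u, hu, hu0, hb⟩ := Module.End.exists_mem_ne_zero_forall_apply_eq_smul_of_commute
    (D.pairOp W h) (pairOp_commute h) ((Submodule.ne_bot_iff _).2 ⟨v, hv, hv0⟩)
    fun s _ hx => pairOp_mem_wtSp hx h s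
  choose b hb using hb
  have hC := ((isShiftedWeightVector_zero_iff).2 hu).lie_C
  obtain ⟨c, F, hF⟩ := exists_isPairFamily (γ := D.charge χ)
    (G := {m | b m ≠ D.charge χ m}) (i := i) (by rwa [charge_single])
    fun m hm => ne_charge_or_ne_charge_neg hh hC hb hu0 hm
  exact not_isPairFamily hfd hh hu hu0 hb c F hF

theorem lie_C_eq_zero (hwt : (⨆ χ : L → ℂ, D.wtSp W χ) = ⊤)
    (hfd : ∀ μ : L → ℂ, FiniteDimensional ℂ (D.wtSp W μ)) (hh : B h h = 1) (i : Fin 2)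
    (w : W) : ⁅D.C i, w⁆ = 0 := by
  have hker (χ : L → ℂ) : D.wtSp W χ ≤ LinearMap.ker (LieModule.toEnd ℂ L W (D.C i)) := by
    intro v hv
    by_cases hv0 : v = 0
    · simp [hv0]
    · rw [LinearMap.mem_ker, LieModule.toEnd_apply_apply,
        mem_wtSp_iff.1 hv _ (.inl (.inr ⟨i, rfl⟩)),
        weight_C_eq_zero hfd hh hv hv0 i, zero_smul]
  simpa using iSup_le hker (hwt ▸ Submodule.mem_top : w ∈ ⨆ χ, D.wtSp W χ)

theorem pairOp_lie_E_of_lie_C_eq_zero (hC : ∀ i (w : W), ⁅D.C i, w⁆ = 0) (h : H)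
    (s r : Fin 2 → ℤ) (h' : H) (w : W) :
    D.pairOp W h s ⁅D.E r h', w⁆ = ⁅D.E r h', D.pairOp W h s w⁆ := by
  have hcomm (a : Fin 2 → ℤ) (h₁ : H) (x : W) :
      ⁅D.E a h₁, ⁅D.E r h', x⁆⁆ = ⁅D.E r h', ⁅D.E a h₁, x⁆⁆ := by
    simpa [charge] using
      lie_E_lie_E (D := D) (χ := 0) (w := x) (fun i => by simp [hC]) a r h₁ h'
  rw [pairOp_apply, pairOp_apply, hcomm, hcomm]

theorem pairOp_foldr_lie_E (hC : ∀ i (w : W), ⁅D.C i, w⁆ = 0) {h : H} {s : Fin 2 → ℤ}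
    {a : ℂ} (hv : D.pairOp W h s v = a • v) (l : List (H × (Fin 2 → ℤ))) :
    D.pairOp W h s (l.foldr (fun p w => ⁅D.E p.2 p.1, w⁆) v) =
      a • l.foldr (fun p w => ⁅D.E p.2 p.1, w⁆) v := by
  induction l with
  | nil => exact hv
  | cons p l ih => rw [List.foldr_cons, pairOp_lie_E_of_lie_C_eq_zero hC, ih, lie_smul]

end HeisAlg

/-- For `h ∈ H` with `(h,h) = 1`, the operators
`e = (h t₁)(h t₁⁻¹)` and `f = (h t₂)(h t₂⁻¹)` preserve each weight space of a
weight module `W` with finite-dimensional weight spaces, and every monomial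
`h₁ t₁^{a₁}t₂^{b₁} ⋯ h_n t₁^{a_n}t₂^{b_n} v` built from a common eigenvector `v`
of `e` and `f` is again a common eigenvector of `e` and `f`. -/
theorem eOp_fOp_preserve_weight_spaces_and_monomials_are_eigenvectors
    (hwt : (⨆ χ : L → ℂ, D.wtSp W χ) = ⊤)
    (hfd : ∀ χ : L → ℂ, FiniteDimensional ℂ (D.wtSp W χ))
    (h : H) (hh : B h h = 1) :
    (∀ (χ : L → ℂ) (v : W), v ∈ D.wtSp W χ →
        D.eOp W h v ∈ D.wtSp W χ ∧ D.fOp W h v ∈ D.wtSp W χ) ∧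
    (∀ (v : W) (a b : ℂ), D.eOp W h v = a • v → D.fOp W h v = b • v →
      ∀ l : List (H × (Fin 2 → ℤ)),
        ∃ a' b' : ℂ,
          D.eOp W h (l.foldr (fun p w => ⁅D.E p.2 p.1, w⁆) v)
              = a' • l.foldr (fun p w => ⁅D.E p.2 p.1, w⁆) v ∧
          D.fOp W h (l.foldr (fun p w => ⁅D.E p.2 p.1, w⁆) v)
              = b' • l.foldr (fun p w => ⁅D.E p.2 p.1, w⁆) v) := by
  have hC := HeisAlg.lie_C_eq_zero hwt hfd hh
  simp only [HeisAlg.eOp_eq_pairOp, HeisAlg.fOp_eq_pairOp]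
  exact ⟨fun χ v hv => ⟨HeisAlg.pairOp_mem_wtSp hv h _, HeisAlg.pairOp_mem_wtSp hv h _⟩,
    fun v a b hea heb l =>
      ⟨a, b, HeisAlg.pairOp_foldr_lie_E hC hea l, HeisAlg.pairOp_foldr_lie_E hC heb l⟩⟩

end
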